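/- arXiv:2511.13140 — 3 statements merged into one kernel-verified Lean document; each statement's English description precedes it below -/
import Mathlib

section
/- Let G be a finite simple graph that is 3-regular and contains a cycle of length 5. Then G admits no star 4-edge coloring; equivalently, the star chromatic index of G satisfies χ'_st(G) ≥ 5. -/
/-- A star `k`-edge coloring of a simple graph `G`: a proper edge coloring with colors
`0, …, k-1` such that the edges of every path of length 4 and of every cycle of length 4
receive at least 3 distinct colors. -/
def IsStarEdgeColoring {V : Type*} (G : SimpleGraph V) (k : ℕ) (c : Sym2 V → ℕ) : Prop :=
  (∀ e ∈ G.edgeSet, c e < k) ∧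
  (∀ a b b' : V, G.Adj a b → G.Adj a b' → b ≠ b' → c s(a, b) ≠ c s(a, b')) ∧
  (∀ v0 v1 v2 v3 v4 : V, ([v0, v1, v2, v3, v4] : List V).Nodup →
    G.Adj v0 v1 → G.Adj v1 v2 → G.Adj v2 v3 → G.Adj v3 v4 →
    3 ≤ ({c s(v0, v1), c s(v1, v2), c s(v2, v3), c s(v3, v4)} : Finset ℕ).card) ∧
  (∀ v0 v1 v2 v3 : V, ([v0, v1, v2, v3] : List V).Nodup →
    G.Adj v0 v1 → G.Adj v1 v2 → G.Adj v2 v3 → G.Adj v3 v0 →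
    3 ≤ ({c s(v0, v1), c s(v1, v2), c s(v2, v3), c s(v3, v0)} : Finset ℕ).card)

private lemma star_two_colors (x y : ℕ) (h : 3 ≤ ({x, y, x, y} : Finset ℕ).card) : False := by
  have h2 : ({x, y, x, y} : Finset ℕ) = {x, y} := by ext z; simp
  rw [h2] at h
  have := Finset.card_insert_le x ({y} : Finset ℕ)
  simp at this
  omega

private lemma nodup4 {V : Type*} (a b c d : V) (h1 : a ≠ b) (h2 : a ≠ c) (h3 : a ≠ d)
    (h4 : b ≠ c) (h5 : b ≠ d) (h6 : c ≠ d) : ([a, b, c, d] : List V).Nodup := by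
  simp [*]

private lemma nodup5 {V : Type*} (a b c d e : V) (h1 : a ≠ b) (h2 : a ≠ c) (h3 : a ≠ d)
    (h4 : a ≠ e) (h5 : b ≠ c) (h6 : b ≠ d) (h7 : b ≠ e) (h8 : c ≠ d) (h9 : c ≠ e)
    (h10 : d ≠ e) : ([a, b, c, d, e] : List V).Nodup := by
  simp [*]

/-- Third neighbor in a cubic graph. -/
private lemma star_third {V : Type*} (G : SimpleGraph V) [∀ v, Fintype (G.neighborSet v)]
    (hreg : G.IsRegularOfDegree 3) (v a b : V) :
    ∃ u, G.Adj v u ∧ u ≠ a ∧ u ≠ b := by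
  classical
  have hns : ¬ (G.neighborFinset v ⊆ {a, b}) := by
    intro hsub
    have h1 := Finset.card_le_card hsub
    have h2 : (G.neighborFinset v).card = 3 := hreg v
    have h3 : ({a, b} : Finset V).card ≤ 2 := by
      have := Finset.card_insert_le a ({b} : Finset V); simp at this; omega
    omega
  obtain ⟨u, hu, hu2⟩ := Finset.not_subset.mp hns
  simp only [SimpleGraph.mem_neighborFinset] at hu
  simp only [Finset.mem_insert, Finset.mem_singleton, not_or] at hu2
  exact ⟨u, hu, hu2.1, hu2.2⟩

/-- Star condition for a pendant edge `v0-u` followed by the path `v0-v1-v2-v3`. -/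
private lemma star_lemA {V : Type*} (G : SimpleGraph V) (c : Sym2 V → ℕ)
    (hc : IsStarEdgeColoring G 4 c) (v0 v1 v2 v3 u : V)
    (n02 : v0 ≠ v2) (n03 : v0 ≠ v3) (n13 : v1 ≠ v3)
    (h01 : G.Adj v0 v1) (h12 : G.Adj v1 v2) (h23 : G.Adj v2 v3)
    (hu : G.Adj v0 u) (hu1 : u ≠ v1) :
    ¬ (c s(v0, u) = c s(v1, v2) ∧ c s(v0, v1) = c s(v2, v3)) := by
  obtain ⟨-, hprop, hpath, hcyc⟩ := hc
  rintro ⟨hab, hcd⟩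
  have n01 : v0 ≠ v1 := h01.ne
  have n12 : v1 ≠ v2 := h12.ne
  have n23 : v2 ≠ v3 := h23.ne
  have hu0 : u ≠ v0 := fun h => G.irrefl (h ▸ hu)
  by_cases hu2 : u = v2
  · subst hu2
    refine hprop u v0 v1 hu.symm h12.symm n01 ?_
    rw [Sym2.eq_swap (a := u) (b := v0), Sym2.eq_swap (a := u) (b := v1)]
    exact hab
  · by_cases hu3 : u = v3
    · subst hu3
      have h4c := hcyc v0 v1 v2 u (nodup4 _ _ _ _ n01 n02 n03 n12 n13 (Ne.symm hu2))
        h01 h12 h23 hu.symm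
      rw [Sym2.eq_swap (a := u) (b := v0), hab, ← hcd] at h4c
      exact star_two_colors _ _ h4c
    · have hp := hpath u v0 v1 v2 v3
        (nodup5 _ _ _ _ _ hu0 hu1 hu2 hu3 n01 n02 n03 n12 n13 n23)
        hu.symm h01 h12 h23
      rw [Sym2.eq_swap (a := u) (b := v0), hab, hcd] at hp
      exact star_two_colors _ _ hp

/-- Star condition for the path `u - a - b - d - w` with pendant edges at both ends. -/
private lemma star_lemB {V : Type*} (G : SimpleGraph V) (c : Sym2 V → ℕ)
    (hc : IsStarEdgeColoring G 4 c) (a b d u w : V)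
    (hab : G.Adj a b) (hbd : G.Adj b d) (had : a ≠ d)
    (hu : G.Adj a u) (hub : u ≠ b) (hw : G.Adj d w) (hwb : w ≠ b) :
    ¬ (c s(a, u) = c s(b, d) ∧ c s(d, w) = c s(a, b)) := by
  obtain ⟨-, hprop, hpath, hcyc⟩ := hc
  rintro ⟨h1, h2⟩
  have hua : u ≠ a := fun h => G.irrefl (h ▸ hu)
  have hwd : w ≠ d := fun h => G.irrefl (h ▸ hw)
  by_cases hud : u = d
  · subst hud
    refine hprop u a b hu.symm hbd.symm hab.ne ?_
    rw [Sym2.eq_swap (a := u) (b := a), Sym2.eq_swap (a := u) (b := b)]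
    exact h1
  · by_cases hwa : w = a
    · subst hwa
      refine hprop w d b hw.symm hab (Ne.symm hbd.ne) ?_
      rw [Sym2.eq_swap (a := w) (b := d)]
      exact h2
    · by_cases huw : u = w
      · subst huw
        have h4c := hcyc a b d u
          (nodup4 _ _ _ _ hab.ne had (Ne.symm hua) hbd.ne (Ne.symm hub) (Ne.symm hwd))
          hab hbd hw hu.symm
        rw [h2, Sym2.eq_swap (a := u) (b := a), h1] at h4c
        exact star_two_colors _ _ h4c
      · have hp := hpath u a b d w
          (nodup5 _ _ _ _ _ hua hub hud huw hab.ne had (Ne.symm hwa) hbd.ne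
            (Ne.symm hwb) (Ne.symm hwd))
          hu.symm hab hbd hw
        rw [Sym2.eq_swap (a := u) (b := a), h1, h2] at hp
        exact star_two_colors _ _ hp

/-- If two edges at cyclic distance two on a 5-cycle of a cubic graph get equal colors
in a star 4-edge coloring, we get a contradiction. -/
private lemma star_master {V : Type*} (G : SimpleGraph V) [∀ v, Fintype (G.neighborSet v)]
    (hreg : G.IsRegularOfDegree 3) (c : Sym2 V → ℕ) (hc : IsStarEdgeColoring G 4 c)
    (v0 v1 v2 v3 v4 : V) (hnd : ([v0, v1, v2, v3, v4] : List V).Nodup)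
    (h01 : G.Adj v0 v1) (h12 : G.Adj v1 v2) (h23 : G.Adj v2 v3) (h34 : G.Adj v3 v4)
    (h40 : G.Adj v4 v0) (heq : c s(v0, v1) = c s(v2, v3)) : False := by
  obtain ⟨u0, hu0, hu04, hu01⟩ := star_third G hreg v0 v4 v1
  obtain ⟨u3, hu3, hu32, hu34⟩ := star_third G hreg v3 v2 v4
  simp only [List.nodup_cons, List.mem_cons, List.not_mem_nil, or_false, not_or,
    List.nodup_nil, and_true] at hnd
  obtain ⟨⟨n01, n02, n03, n04⟩, ⟨n12, n13, n14⟩, ⟨n23, n24⟩, n34, -⟩ := hnd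
  obtain ⟨hlt, hprop, hpath, hcyc⟩ := hc
  have hcfull : IsStarEdgeColoring G 4 c := ⟨hlt, hprop, hpath, hcyc⟩
  -- bounds
  have l0 : c s(v0, v1) < 4 := hlt _ (G.mem_edgeSet.mpr h01)
  have l1 : c s(v1, v2) < 4 := hlt _ (G.mem_edgeSet.mpr h12)
  have l2 : c s(v2, v3) < 4 := hlt _ (G.mem_edgeSet.mpr h23)
  have l3 : c s(v3, v4) < 4 := hlt _ (G.mem_edgeSet.mpr h34)
  have l4 : c s(v4, v0) < 4 := hlt _ (G.mem_edgeSet.mpr h40)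
  have ld0 : c s(v0, u0) < 4 := hlt _ (G.mem_edgeSet.mpr hu0)
  have ld3 : c s(v3, u3) < 4 := hlt _ (G.mem_edgeSet.mpr hu3)
  -- properness around the cycle
  have p01 : c s(v0, v1) ≠ c s(v1, v2) := by
    have := hprop v1 v0 v2 h01.symm h12 n02
    rwa [Sym2.eq_swap (a := v1) (b := v0)] at this
  have p12 : c s(v1, v2) ≠ c s(v2, v3) := by
    have := hprop v2 v1 v3 h12.symm h23 n13
    rwa [Sym2.eq_swap (a := v2) (b := v1)] at this
  have p23 : c s(v2, v3) ≠ c s(v3, v4) := by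
    have := hprop v3 v2 v4 h23.symm h34 n24
    rwa [Sym2.eq_swap (a := v3) (b := v2)] at this
  have p34 : c s(v3, v4) ≠ c s(v4, v0) := by
    have := hprop v4 v3 v0 h34.symm h40 (Ne.symm n03)
    rwa [Sym2.eq_swap (a := v4) (b := v3)] at this
  have p40 : c s(v4, v0) ≠ c s(v0, v1) := by
    have := hprop v0 v4 v1 h40.symm h01 (Ne.symm n14)
    rwa [Sym2.eq_swap (a := v0) (b := v4)] at this
  -- properness of the pendant edges
  have pd0a : c s(v0, u0) ≠ c s(v4, v0) := by
    have := hprop v0 u0 v4 hu0 h40.symm hu04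
    rwa [Sym2.eq_swap (a := v0) (b := v4)] at this
  have pd0b : c s(v0, u0) ≠ c s(v0, v1) := hprop v0 u0 v1 hu0 h01 hu01
  have pd3a : c s(v3, u3) ≠ c s(v2, v3) := by
    have := hprop v3 u3 v2 hu3 h23.symm hu32
    rwa [Sym2.eq_swap (a := v3) (b := v2)] at this
  have pd3b : c s(v3, u3) ≠ c s(v3, v4) := hprop v3 u3 v4 hu3 h34 hu34
  -- path conditions along the cycle
  have hC0 : ¬ (c s(v0, v1) = c s(v2, v3) ∧ c s(v1, v2) = c s(v3, v4)) := by
    rintro ⟨e1, e2⟩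
    have hp := hpath v0 v1 v2 v3 v4
      (nodup5 _ _ _ _ _ n01 n02 n03 n04 n12 n13 n14 n23 n24 n34) h01 h12 h23 h34
    rw [e1, e2] at hp
    exact star_two_colors _ _ hp
  have hC4 : ¬ (c s(v4, v0) = c s(v1, v2) ∧ c s(v0, v1) = c s(v2, v3)) := by
    rintro ⟨e1, e2⟩
    have hp := hpath v4 v0 v1 v2 v3
      (nodup5 _ _ _ _ _ (Ne.symm n04) (Ne.symm n14) (Ne.symm n24) (Ne.symm n34)
        n01 n02 n03 n12 n13 n23) h40 h01 h12 h23
    rw [e1, e2] at hp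
    exact star_two_colors _ _ hp
  -- pendant path conditions
  have hA0 : ¬ (c s(v0, u0) = c s(v1, v2) ∧ c s(v0, v1) = c s(v2, v3)) :=
    star_lemA G c hcfull v0 v1 v2 v3 u0 n02 n03 n13 h01 h12 h23 hu0 hu01
  have hA3 : ¬ (c s(v3, u3) = c s(v1, v2) ∧ c s(v2, v3) = c s(v0, v1)) := by
    have := star_lemA G c hcfull v3 v2 v1 v0 u3 (Ne.symm n13) (Ne.symm n03) (Ne.symm n02)
      h23.symm h12.symm h01.symm hu3 hu32
    rwa [Sym2.eq_swap (a := v2) (b := v1), Sym2.eq_swap (a := v3) (b := v2),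
      Sym2.eq_swap (a := v1) (b := v0)] at this
  have hB3 : ¬ (c s(v3, u3) = c s(v4, v0) ∧ c s(v0, u0) = c s(v3, v4)) :=
    star_lemB G c hcfull v3 v4 v0 u3 u0 h34 h40 (Ne.symm n03) hu3 hu34 hu0 hu04
  omega

/-- A 3-regular finite simple graph containing a cycle of length 5 admits no star
4-edge coloring, i.e. its star chromatic index is at least 5. -/
theorem cubic_with_C5_no_star4 {V : Type*} [Fintype V] (G : SimpleGraph V)
    [∀ v, Fintype (G.neighborSet v)]
    (hreg : G.IsRegularOfDegree 3)
    (hC5 : ∃ v0 v1 v2 v3 v4 : V, ([v0, v1, v2, v3, v4] : List V).Nodup ∧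
      G.Adj v0 v1 ∧ G.Adj v1 v2 ∧ G.Adj v2 v3 ∧ G.Adj v3 v4 ∧ G.Adj v4 v0) :
    ¬ ∃ c : Sym2 V → ℕ, IsStarEdgeColoring G 4 c := by
  rintro ⟨c, hc⟩
  obtain ⟨v0, v1, v2, v3, v4, hnd, h01, h12, h23, h34, h40⟩ := hC5
  have hnd' := hnd
  simp only [List.nodup_cons, List.mem_cons, List.not_mem_nil, or_false, not_or,
    List.nodup_nil, and_true] at hnd'
  obtain ⟨⟨n01, n02, n03, n04⟩, ⟨n12, n13, n14⟩, ⟨n23, n24⟩, n34, -⟩ := hnd'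
  obtain ⟨hlt, hprop, hpath, hcyc⟩ := hc
  have hcfull : IsStarEdgeColoring G 4 c := ⟨hlt, hprop, hpath, hcyc⟩
  have l0 : c s(v0, v1) < 4 := hlt _ (G.mem_edgeSet.mpr h01)
  have l1 : c s(v1, v2) < 4 := hlt _ (G.mem_edgeSet.mpr h12)
  have l2 : c s(v2, v3) < 4 := hlt _ (G.mem_edgeSet.mpr h23)
  have l3 : c s(v3, v4) < 4 := hlt _ (G.mem_edgeSet.mpr h34)
  have l4 : c s(v4, v0) < 4 := hlt _ (G.mem_edgeSet.mpr h40)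
  have p01 : c s(v0, v1) ≠ c s(v1, v2) := by
    have := hprop v1 v0 v2 h01.symm h12 n02
    rwa [Sym2.eq_swap (a := v1) (b := v0)] at this
  have p12 : c s(v1, v2) ≠ c s(v2, v3) := by
    have := hprop v2 v1 v3 h12.symm h23 n13
    rwa [Sym2.eq_swap (a := v2) (b := v1)] at this
  have p23 : c s(v2, v3) ≠ c s(v3, v4) := by
    have := hprop v3 v2 v4 h23.symm h34 n24
    rwa [Sym2.eq_swap (a := v3) (b := v2)] at this
  have p34 : c s(v3, v4) ≠ c s(v4, v0) := by
    have := hprop v4 v3 v0 h34.symm h40 (Ne.symm n03)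
    rwa [Sym2.eq_swap (a := v4) (b := v3)] at this
  have p40 : c s(v4, v0) ≠ c s(v0, v1) := by
    have := hprop v0 v4 v1 h40.symm h01 (Ne.symm n14)
    rwa [Sym2.eq_swap (a := v0) (b := v4)] at this
  have hdisj : c s(v0, v1) = c s(v2, v3) ∨ c s(v1, v2) = c s(v3, v4) ∨
      c s(v2, v3) = c s(v4, v0) ∨ c s(v3, v4) = c s(v0, v1) ∨
      c s(v4, v0) = c s(v1, v2) := by omega
  rcases hdisj with h | h | h | h | h
  · exact star_master G hreg c hcfull v0 v1 v2 v3 v4 hnd h01 h12 h23 h34 h40 h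
  · exact star_master G hreg c hcfull v1 v2 v3 v4 v0
      (nodup5 _ _ _ _ _ n12 n13 n14 (Ne.symm n01) n23 n24 (Ne.symm n02) n34
        (Ne.symm n03) (Ne.symm n04)) h12 h23 h34 h40 h01 h
  · exact star_master G hreg c hcfull v2 v3 v4 v0 v1
      (nodup5 _ _ _ _ _ n23 n24 (Ne.symm n02) (Ne.symm n12) n34 (Ne.symm n03)
        (Ne.symm n13) (Ne.symm n04) (Ne.symm n14) n01) h23 h34 h40 h01 h12 h
  · exact star_master G hreg c hcfull v3 v4 v0 v1 v2
      (nodup5 _ _ _ _ _ n34 (Ne.symm n03) (Ne.symm n13) (Ne.symm n23) (Ne.symm n04)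
        (Ne.symm n14) (Ne.symm n24) n01 n02 n12) h34 h40 h01 h12 h23 h
  · exact star_master G hreg c hcfull v4 v0 v1 v2 v3
      (nodup5 _ _ _ _ _ (Ne.symm n04) (Ne.symm n14) (Ne.symm n24) (Ne.symm n34)
        n01 n02 n03 n12 n13 n23) h40 h01 h12 h23 h34 h
end

section
/- The necklace Ne_2 has star chromatic index exactly 6: Ne_2 admits a star 6-edge coloring but admits no star 5-edge coloring. -/
/-- Vertices of the necklace `Ne_h`: `Sum.inl i` is the spine vertex `v_{i+1}`
(for `i : Fin h`) and `Sum.inr j` is the leaf `u_j` (for `j : Fin (h+2)`). -/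
abbrev NeckVert (h : ℕ) := Fin h ⊕ Fin (h + 2)

/-- The indices of the leaves along the exterior cycle of the necklace `Ne_h`:
`u_0, u_2, u_3, …, u_{h-1}, u_h, u_{h+1}, u_1` (and back to `u_0`). -/
def neckCycle (h : ℕ) : List ℕ := 0 :: List.range' 2 (h - 2) ++ [h, h + 1, 1]

/-- Base adjacency relation of `Ne_h`: spine edges `v_i v_{i+1}`; tree edges
`v_1 u_0`, `v_1 u_1`, `v_h u_h`, `v_h u_{h+1}`, and `v_i u_i` for `2 ≤ i ≤ h - 1`;
and the exterior cycle through the leaves, whose consecutive pairs (including the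
wrap-around pair) are exactly the pairs of `neckCycle h` zipped with its rotation. -/
def neckRel (h : ℕ) : NeckVert h → NeckVert h → Prop
  | Sum.inl i, Sum.inl i' => i'.val = i.val + 1
  | Sum.inl i, Sum.inr j =>
      (i.val = 0 ∧ (j.val = 0 ∨ j.val = 1)) ∨
      (i.val = h - 1 ∧ (j.val = h ∨ j.val = h + 1)) ∨
      (j.val = i.val + 1 ∧ 2 ≤ j.val ∧ j.val ≤ h - 1)
  | Sum.inr j, Sum.inr j' => (j.val, j'.val) ∈ (neckCycle h).zip ((neckCycle h).rotate 1)
  | _, _ => False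

/-- The necklace `Ne_h`: the cubic Halin graph over a caterpillar with `h + 2` leaves
having all leaf-edges on the same side of the spine. -/
def necklace (h : ℕ) : SimpleGraph (NeckVert h) := SimpleGraph.fromRel (neckRel h)

private abbrev A0 : NeckVert 2 := Sum.inl 0
private abbrev A1 : NeckVert 2 := Sum.inl 1
private abbrev B0 : NeckVert 2 := Sum.inr 0
private abbrev B1 : NeckVert 2 := Sum.inr 1
private abbrev B2 : NeckVert 2 := Sum.inr 2
private abbrev B3 : NeckVert 2 := Sum.inr 3

instance neckRelDec : ∀ a b : NeckVert 2, Decidable (neckRel 2 a b)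
  | Sum.inl i, Sum.inl i' => inferInstanceAs (Decidable (i'.val = i.val + 1))
  | Sum.inl i, Sum.inr j => inferInstanceAs (Decidable ((i.val = 0 ∧ (j.val = 0 ∨ j.val = 1)) ∨ (i.val = 2 - 1 ∧ (j.val = 2 ∨ j.val = 2 + 1)) ∨ (j.val = i.val + 1 ∧ 2 ≤ j.val ∧ j.val ≤ 2 - 1)))
  | Sum.inr _, Sum.inl _ => inferInstanceAs (Decidable False)
  | Sum.inr j, Sum.inr j' => inferInstanceAs (Decidable ((j.val, j'.val) ∈ (neckCycle 2).zip ((neckCycle 2).rotate 1)))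

instance instNeckAdjDec (a b : NeckVert 2) : Decidable ((necklace 2).Adj a b) :=
  inferInstanceAs (Decidable (a ≠ b ∧ (neckRel 2 a b ∨ neckRel 2 b a)))

private def col6 : NeckVert 2 → NeckVert 2 → ℕ
  | Sum.inl 0, Sum.inr 0 => 0
  | Sum.inr 0, Sum.inl 0 => 0
  | Sum.inl 0, Sum.inr 1 => 1
  | Sum.inr 1, Sum.inl 0 => 1
  | Sum.inr 0, Sum.inr 1 => 2
  | Sum.inr 1, Sum.inr 0 => 2
  | Sum.inl 0, Sum.inl 1 => 2
  | Sum.inl 1, Sum.inl 0 => 2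
  | Sum.inl 1, Sum.inr 2 => 3
  | Sum.inr 2, Sum.inl 1 => 3
  | Sum.inl 1, Sum.inr 3 => 4
  | Sum.inr 3, Sum.inl 1 => 4
  | Sum.inr 2, Sum.inr 3 => 0
  | Sum.inr 3, Sum.inr 2 => 0
  | Sum.inr 0, Sum.inr 2 => 5
  | Sum.inr 2, Sum.inr 0 => 5
  | Sum.inr 1, Sum.inr 3 => 3
  | Sum.inr 3, Sum.inr 1 => 3
  | _, _ => 0

private lemma col6_symm : ∀ a b : NeckVert 2, col6 a b = col6 b a := by decide

private def c6 : Sym2 (NeckVert 2) → ℕ := Sym2.lift ⟨col6, col6_symm⟩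

private def StarConstraints (m0 m1 m2 m3 m4 m5 m6 m7 m8 : Fin 5) : Prop :=
  m3 ≠ m0 ∧
  m3 ≠ m1 ∧
  m0 ≠ m1 ∧
  m3 ≠ m4 ∧
  m3 ≠ m5 ∧
  m4 ≠ m5 ∧
  m0 ≠ m2 ∧
  m0 ≠ m7 ∧
  m2 ≠ m7 ∧
  m1 ≠ m2 ∧
  m1 ≠ m8 ∧
  m2 ≠ m8 ∧
  m4 ≠ m7 ∧
  m4 ≠ m6 ∧
  m7 ≠ m6 ∧
  m5 ≠ m8 ∧
  m5 ≠ m6 ∧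
  m8 ≠ m6 ∧
  ¬(m3 = m7 ∧ m4 = m2) ∧
  ¬(m3 = m6 ∧ m4 = m8) ∧
  ¬(m3 = m8 ∧ m5 = m2) ∧
  ¬(m3 = m6 ∧ m5 = m7) ∧
  ¬(m0 = m8 ∧ m2 = m5) ∧
  ¬(m0 = m8 ∧ m2 = m6) ∧
  ¬(m0 = m4 ∧ m7 = m5) ∧
  ¬(m0 = m6 ∧ m7 = m5) ∧
  ¬(m0 = m6 ∧ m7 = m8) ∧
  ¬(m1 = m7 ∧ m2 = m4) ∧
  ¬(m1 = m7 ∧ m2 = m6) ∧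
  ¬(m1 = m5 ∧ m8 = m4) ∧
  ¬(m1 = m6 ∧ m8 = m4) ∧
  ¬(m1 = m6 ∧ m8 = m7) ∧
  ¬(m3 = m2 ∧ m0 = m8) ∧
  ¬(m3 = m7 ∧ m0 = m6) ∧
  ¬(m3 = m2 ∧ m1 = m7) ∧
  ¬(m3 = m8 ∧ m1 = m6) ∧
  ¬(m4 = m0 ∧ m7 = m1) ∧
  ¬(m4 = m2 ∧ m7 = m8) ∧
  ¬(m4 = m8 ∧ m6 = m2) ∧
  ¬(m5 = m1 ∧ m8 = m0) ∧
  ¬(m5 = m2 ∧ m8 = m7) ∧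
  ¬(m5 = m7 ∧ m6 = m2) ∧
  ¬(m0 = m4 ∧ m3 = m6) ∧
  ¬(m0 = m5 ∧ m3 = m8) ∧
  ¬(m0 = m5 ∧ m3 = m6) ∧
  ¬(m0 = m8 ∧ m1 = m6) ∧
  ¬(m2 = m3 ∧ m1 = m4) ∧
  ¬(m2 = m3 ∧ m1 = m5) ∧
  ¬(m2 = m5 ∧ m8 = m4) ∧
  ¬(m7 = m3 ∧ m4 = m1) ∧
  ¬(m7 = m5 ∧ m4 = m8) ∧
  ¬(m1 = m4 ∧ m3 = m6) ∧
  ¬(m1 = m5 ∧ m3 = m6) ∧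
  ¬(m1 = m7 ∧ m0 = m6) ∧
  ¬(m2 = m3 ∧ m0 = m4) ∧
  ¬(m2 = m3 ∧ m0 = m5) ∧
  ¬(m2 = m4 ∧ m7 = m5) ∧
  ¬(m4 = m1 ∧ m3 = m8) ∧
  ¬(m7 = m3 ∧ m0 = m5) ∧
  ¬(m7 = m1 ∧ m0 = m8) ∧
  ¬(m3 = m7 ∧ m4 = m0) ∧
  ¬(m3 = m8 ∧ m5 = m1) ∧
  ¬(m2 = m6 ∧ m8 = m7)

set_option maxRecDepth 40000 in
set_option synthInstance.maxSize 10000 in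
set_option synthInstance.maxHeartbeats 2000000 in
instance (m0 m1 m2 m3 m4 m5 m6 m7 m8 : Fin 5) : Decidable (StarConstraints m0 m1 m2 m3 m4 m5 m6 m7 m8) := by
  unfold StarConstraints; infer_instance

set_option maxRecDepth 40000 in
set_option synthInstance.maxSize 10000 in
set_option synthInstance.maxHeartbeats 2000000 in
private lemma noFive : ∀ m3 m4 m5 m6 m7 m8 : Fin 5, ¬ StarConstraints 0 1 2 m3 m4 m5 m6 m7 m8 := by decide

private lemma exists_perm (x y z : Fin 5) (hxy : x ≠ y) (hxz : x ≠ z) (hyz : y ≠ z) :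
    ∃ σ : Fin 5 → Fin 5, Function.Injective σ ∧ σ x = 0 ∧ σ y = 1 ∧ σ z = 2 := by
  let e1 := Equiv.swap x 0
  have h1x : e1 x = 0 := Equiv.swap_apply_left x 0
  have hy1 : e1 y ≠ 0 := fun h => hxy (e1.injective (h.trans h1x.symm)).symm
  have hz1 : e1 z ≠ 0 := fun h => hxz (e1.injective (h.trans h1x.symm)).symm
  have hyz1 : e1 y ≠ e1 z := fun h => hyz (e1.injective h)
  let e2 := Equiv.swap (e1 y) 1
  have h2y : e2 (e1 y) = 1 := Equiv.swap_apply_left _ _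
  have h20 : e2 0 = 0 := Equiv.swap_apply_of_ne_of_ne (Ne.symm hy1) (by decide)
  have hz2ne1 : e2 (e1 z) ≠ 1 := fun h => hyz1 (e2.injective (h.trans h2y.symm)).symm
  have hz2ne0 : e2 (e1 z) ≠ 0 := fun h => hz1 (e2.injective (h.trans h20.symm))
  let e3 := Equiv.swap (e2 (e1 z)) 2
  have h3z : e3 (e2 (e1 z)) = 2 := Equiv.swap_apply_left _ _
  have h30 : e3 0 = 0 := Equiv.swap_apply_of_ne_of_ne (Ne.symm hz2ne0) (by decide)
  have h31 : e3 1 = 1 := Equiv.swap_apply_of_ne_of_ne (Ne.symm hz2ne1) (by decide)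
  refine ⟨fun m => e3 (e2 (e1 m)), ?_, ?_, ?_, ?_⟩
  · exact fun a b h => e1.injective (e2.injective (e3.injective h))
  · show e3 (e2 (e1 x)) = 0
    rw [h1x, h20, h30]
  · show e3 (e2 (e1 y)) = 1
    rw [h2y, h31]
  · exact h3z

private lemma star_aux {a b c d : ℕ} (h : 3 ≤ ({a, b, c, d} : Finset ℕ).card) :
    ¬(a = c ∧ b = d) := by
  rintro ⟨rfl, rfl⟩
  have hsub : ({a, b, a, b} : Finset ℕ) ⊆ {a, b} := by
    intro x hx; simp at hx ⊢; tauto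
  have h1 := Finset.card_le_card hsub
  have h2 : ({a, b} : Finset ℕ).card ≤ 2 :=
    (Finset.card_insert_le a {b}).trans (by simp)
  omega

set_option maxRecDepth 40000 in
set_option synthInstance.maxSize 10000 in
set_option synthInstance.maxHeartbeats 2000000 in
/-- The necklace `Ne_2` has star chromatic index exactly 6: it admits a star 6-edge
coloring but no star 5-edge coloring. -/
theorem starChromaticIndex_necklace_two :
    (∃ c : Sym2 (NeckVert 2) → ℕ, IsStarEdgeColoring (necklace 2) 6 c) ∧
    ¬ ∃ c : Sym2 (NeckVert 2) → ℕ, IsStarEdgeColoring (necklace 2) 5 c := by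
  constructor
  · refine ⟨c6, ?_, ?_, ?_, ?_⟩
    · have h : ∀ e : Sym2 (NeckVert 2), c6 e < 6 := by decide
      exact fun e _ => h e
    · decide
    · decide
    · decide
  · rintro ⟨c, hlt, hprop, hpath, hcyc⟩
    have adj_0_2 : (necklace 2).Adj A0 B0 := by decide
    have adj_2_0 : (necklace 2).Adj B0 A0 := adj_0_2.symm
    have adj_0_3 : (necklace 2).Adj A0 B1 := by decide
    have adj_3_0 : (necklace 2).Adj B1 A0 := adj_0_3.symm
    have adj_2_3 : (necklace 2).Adj B0 B1 := by decide
    have adj_3_2 : (necklace 2).Adj B1 B0 := adj_2_3.symm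
    have adj_0_1 : (necklace 2).Adj A0 A1 := by decide
    have adj_1_0 : (necklace 2).Adj A1 A0 := adj_0_1.symm
    have adj_1_4 : (necklace 2).Adj A1 B2 := by decide
    have adj_4_1 : (necklace 2).Adj B2 A1 := adj_1_4.symm
    have adj_1_5 : (necklace 2).Adj A1 B3 := by decide
    have adj_5_1 : (necklace 2).Adj B3 A1 := adj_1_5.symm
    have adj_4_5 : (necklace 2).Adj B2 B3 := by decide
    have adj_5_4 : (necklace 2).Adj B3 B2 := adj_4_5.symm
    have adj_2_4 : (necklace 2).Adj B0 B2 := by decide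
    have adj_4_2 : (necklace 2).Adj B2 B0 := adj_2_4.symm
    have adj_3_5 : (necklace 2).Adj B1 B3 := by decide
    have adj_5_3 : (necklace 2).Adj B3 B1 := adj_3_5.symm
    have sw0 : s(B0, A0) = s(A0, B0) := Sym2.eq_swap
    have sw1 : s(B1, A0) = s(A0, B1) := Sym2.eq_swap
    have sw2 : s(B1, B0) = s(B0, B1) := Sym2.eq_swap
    have sw3 : s(A1, A0) = s(A0, A1) := Sym2.eq_swap
    have sw4 : s(B2, A1) = s(A1, B2) := Sym2.eq_swap
    have sw5 : s(B3, A1) = s(A1, B3) := Sym2.eq_swap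
    have sw6 : s(B3, B2) = s(B2, B3) := Sym2.eq_swap
    have sw7 : s(B2, B0) = s(B0, B2) := Sym2.eq_swap
    have sw8 : s(B3, B1) = s(B1, B3) := Sym2.eq_swap
    have hn0 : c s(A0, B0) < 5 := hlt _ ((SimpleGraph.mem_edgeSet _).mpr adj_0_2)
    have hn1 : c s(A0, B1) < 5 := hlt _ ((SimpleGraph.mem_edgeSet _).mpr adj_0_3)
    have hn2 : c s(B0, B1) < 5 := hlt _ ((SimpleGraph.mem_edgeSet _).mpr adj_2_3)
    have hn3 : c s(A0, A1) < 5 := hlt _ ((SimpleGraph.mem_edgeSet _).mpr adj_0_1)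
    have hn4 : c s(A1, B2) < 5 := hlt _ ((SimpleGraph.mem_edgeSet _).mpr adj_1_4)
    have hn5 : c s(A1, B3) < 5 := hlt _ ((SimpleGraph.mem_edgeSet _).mpr adj_1_5)
    have hn6 : c s(B2, B3) < 5 := hlt _ ((SimpleGraph.mem_edgeSet _).mpr adj_4_5)
    have hn7 : c s(B0, B2) < 5 := hlt _ ((SimpleGraph.mem_edgeSet _).mpr adj_2_4)
    have hn8 : c s(B1, B3) < 5 := hlt _ ((SimpleGraph.mem_edgeSet _).mpr adj_3_5)
    have p_3_0 : c s(A0, A1) ≠ c s(A0, B0) := hprop A0 A1 B0 adj_0_1 adj_0_2 (by decide)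
    have p_3_1 : c s(A0, A1) ≠ c s(A0, B1) := hprop A0 A1 B1 adj_0_1 adj_0_3 (by decide)
    have p_0_1 : c s(A0, B0) ≠ c s(A0, B1) := hprop A0 B0 B1 adj_0_2 adj_0_3 (by decide)
    have p_3_4 : c s(A0, A1) ≠ c s(A1, B2) := by
      have h := hprop A1 A0 B2 adj_1_0 adj_1_4 (by decide)
      rwa [sw3] at h
    have p_3_5 : c s(A0, A1) ≠ c s(A1, B3) := by
      have h := hprop A1 A0 B3 adj_1_0 adj_1_5 (by decide)
      rwa [sw3] at h
    have p_4_5 : c s(A1, B2) ≠ c s(A1, B3) := hprop A1 B2 B3 adj_1_4 adj_1_5 (by decide)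
    have p_0_2 : c s(A0, B0) ≠ c s(B0, B1) := by
      have h := hprop B0 A0 B1 adj_2_0 adj_2_3 (by decide)
      rwa [sw0] at h
    have p_0_7 : c s(A0, B0) ≠ c s(B0, B2) := by
      have h := hprop B0 A0 B2 adj_2_0 adj_2_4 (by decide)
      rwa [sw0] at h
    have p_2_7 : c s(B0, B1) ≠ c s(B0, B2) := hprop B0 B1 B2 adj_2_3 adj_2_4 (by decide)
    have p_1_2 : c s(A0, B1) ≠ c s(B0, B1) := by
      have h := hprop B1 A0 B0 adj_3_0 adj_3_2 (by decide)
      rwa [sw1, sw2] at h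
    have p_1_8 : c s(A0, B1) ≠ c s(B1, B3) := by
      have h := hprop B1 A0 B3 adj_3_0 adj_3_5 (by decide)
      rwa [sw1] at h
    have p_2_8 : c s(B0, B1) ≠ c s(B1, B3) := by
      have h := hprop B1 B0 B3 adj_3_2 adj_3_5 (by decide)
      rwa [sw2] at h
    have p_4_7 : c s(A1, B2) ≠ c s(B0, B2) := by
      have h := hprop B2 A1 B0 adj_4_1 adj_4_2 (by decide)
      rwa [sw4, sw7] at h
    have p_4_6 : c s(A1, B2) ≠ c s(B2, B3) := by
      have h := hprop B2 A1 B3 adj_4_1 adj_4_5 (by decide)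
      rwa [sw4] at h
    have p_7_6 : c s(B0, B2) ≠ c s(B2, B3) := by
      have h := hprop B2 B0 B3 adj_4_2 adj_4_5 (by decide)
      rwa [sw7] at h
    have p_5_8 : c s(A1, B3) ≠ c s(B1, B3) := by
      have h := hprop B3 A1 B1 adj_5_1 adj_5_3 (by decide)
      rwa [sw5, sw8] at h
    have p_5_6 : c s(A1, B3) ≠ c s(B2, B3) := by
      have h := hprop B3 A1 B2 adj_5_1 adj_5_4 (by decide)
      rwa [sw5, sw6] at h
    have p_8_6 : c s(B1, B3) ≠ c s(B2, B3) := by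
      have h := hprop B3 B1 B2 adj_5_3 adj_5_4 (by decide)
      rwa [sw8, sw6] at h
    have q0 : ¬(c s(A0, A1) = c s(B0, B2) ∧ c s(A1, B2) = c s(B0, B1)) := by
      have h := hpath A0 A1 B2 B0 B1 (by decide) adj_0_1 adj_1_4 adj_4_2 adj_2_3
      rw [sw7] at h
      exact star_aux h
    have q1 : ¬(c s(A0, A1) = c s(B2, B3) ∧ c s(A1, B2) = c s(B1, B3)) := by
      have h := hpath A0 A1 B2 B3 B1 (by decide) adj_0_1 adj_1_4 adj_4_5 adj_5_3
      rw [sw8] at h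
      exact star_aux h
    have q2 : ¬(c s(A0, A1) = c s(B1, B3) ∧ c s(A1, B3) = c s(B0, B1)) := by
      have h := hpath A0 A1 B3 B1 B0 (by decide) adj_0_1 adj_1_5 adj_5_3 adj_3_2
      rw [sw8, sw2] at h
      exact star_aux h
    have q3 : ¬(c s(A0, A1) = c s(B2, B3) ∧ c s(A1, B3) = c s(B0, B2)) := by
      have h := hpath A0 A1 B3 B2 B0 (by decide) adj_0_1 adj_1_5 adj_5_4 adj_4_2
      rw [sw6, sw7] at h
      exact star_aux h
    have q4 : ¬(c s(A0, B0) = c s(B1, B3) ∧ c s(B0, B1) = c s(A1, B3)) := by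
      have h := hpath A0 B0 B1 B3 A1 (by decide) adj_0_2 adj_2_3 adj_3_5 adj_5_1
      rw [sw5] at h
      exact star_aux h
    have q5 : ¬(c s(A0, B0) = c s(B1, B3) ∧ c s(B0, B1) = c s(B2, B3)) := by
      have h := hpath A0 B0 B1 B3 B2 (by decide) adj_0_2 adj_2_3 adj_3_5 adj_5_4
      rw [sw6] at h
      exact star_aux h
    have q6 : ¬(c s(A0, B0) = c s(A1, B2) ∧ c s(B0, B2) = c s(A1, B3)) := by
      have h := hpath A0 B0 B2 A1 B3 (by decide) adj_0_2 adj_2_4 adj_4_1 adj_1_5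
      rw [sw4] at h
      exact star_aux h
    have q7 : ¬(c s(A0, B0) = c s(B2, B3) ∧ c s(B0, B2) = c s(A1, B3)) := by
      have h := hpath A0 B0 B2 B3 A1 (by decide) adj_0_2 adj_2_4 adj_4_5 adj_5_1
      rw [sw5] at h
      exact star_aux h
    have q8 : ¬(c s(A0, B0) = c s(B2, B3) ∧ c s(B0, B2) = c s(B1, B3)) := by
      have h := hpath A0 B0 B2 B3 B1 (by decide) adj_0_2 adj_2_4 adj_4_5 adj_5_3
      rw [sw8] at h
      exact star_aux h
    have q9 : ¬(c s(A0, B1) = c s(B0, B2) ∧ c s(B0, B1) = c s(A1, B2)) := by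
      have h := hpath A0 B1 B0 B2 A1 (by decide) adj_0_3 adj_3_2 adj_2_4 adj_4_1
      rw [sw2, sw4] at h
      exact star_aux h
    have q10 : ¬(c s(A0, B1) = c s(B0, B2) ∧ c s(B0, B1) = c s(B2, B3)) := by
      have h := hpath A0 B1 B0 B2 B3 (by decide) adj_0_3 adj_3_2 adj_2_4 adj_4_5
      rw [sw2] at h
      exact star_aux h
    have q11 : ¬(c s(A0, B1) = c s(A1, B3) ∧ c s(B1, B3) = c s(A1, B2)) := by
      have h := hpath A0 B1 B3 A1 B2 (by decide) adj_0_3 adj_3_5 adj_5_1 adj_1_4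
      rw [sw5] at h
      exact star_aux h
    have q12 : ¬(c s(A0, B1) = c s(B2, B3) ∧ c s(B1, B3) = c s(A1, B2)) := by
      have h := hpath A0 B1 B3 B2 A1 (by decide) adj_0_3 adj_3_5 adj_5_4 adj_4_1
      rw [sw6, sw4] at h
      exact star_aux h
    have q13 : ¬(c s(A0, B1) = c s(B2, B3) ∧ c s(B1, B3) = c s(B0, B2)) := by
      have h := hpath A0 B1 B3 B2 B0 (by decide) adj_0_3 adj_3_5 adj_5_4 adj_4_2
      rw [sw6, sw7] at h
      exact star_aux h
    have q14 : ¬(c s(A0, A1) = c s(B0, B1) ∧ c s(A0, B0) = c s(B1, B3)) := by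
      have h := hpath A1 A0 B0 B1 B3 (by decide) adj_1_0 adj_0_2 adj_2_3 adj_3_5
      rw [sw3] at h
      exact star_aux h
    have q15 : ¬(c s(A0, A1) = c s(B0, B2) ∧ c s(A0, B0) = c s(B2, B3)) := by
      have h := hpath A1 A0 B0 B2 B3 (by decide) adj_1_0 adj_0_2 adj_2_4 adj_4_5
      rw [sw3] at h
      exact star_aux h
    have q16 : ¬(c s(A0, A1) = c s(B0, B1) ∧ c s(A0, B1) = c s(B0, B2)) := by
      have h := hpath A1 A0 B1 B0 B2 (by decide) adj_1_0 adj_0_3 adj_3_2 adj_2_4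
      rw [sw3, sw2] at h
      exact star_aux h
    have q17 : ¬(c s(A0, A1) = c s(B1, B3) ∧ c s(A0, B1) = c s(B2, B3)) := by
      have h := hpath A1 A0 B1 B3 B2 (by decide) adj_1_0 adj_0_3 adj_3_5 adj_5_4
      rw [sw3, sw6] at h
      exact star_aux h
    have q18 : ¬(c s(A1, B2) = c s(A0, B0) ∧ c s(B0, B2) = c s(A0, B1)) := by
      have h := hpath A1 B2 B0 A0 B1 (by decide) adj_1_4 adj_4_2 adj_2_0 adj_0_3
      rw [sw7, sw0] at h
      exact star_aux h
    have q19 : ¬(c s(A1, B2) = c s(B0, B1) ∧ c s(B0, B2) = c s(B1, B3)) := by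
      have h := hpath A1 B2 B0 B1 B3 (by decide) adj_1_4 adj_4_2 adj_2_3 adj_3_5
      rw [sw7] at h
      exact star_aux h
    have q20 : ¬(c s(A1, B2) = c s(B1, B3) ∧ c s(B2, B3) = c s(B0, B1)) := by
      have h := hpath A1 B2 B3 B1 B0 (by decide) adj_1_4 adj_4_5 adj_5_3 adj_3_2
      rw [sw8, sw2] at h
      exact star_aux h
    have q21 : ¬(c s(A1, B3) = c s(A0, B1) ∧ c s(B1, B3) = c s(A0, B0)) := by
      have h := hpath A1 B3 B1 A0 B0 (by decide) adj_1_5 adj_5_3 adj_3_0 adj_0_2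
      rw [sw8, sw1] at h
      exact star_aux h
    have q22 : ¬(c s(A1, B3) = c s(B0, B1) ∧ c s(B1, B3) = c s(B0, B2)) := by
      have h := hpath A1 B3 B1 B0 B2 (by decide) adj_1_5 adj_5_3 adj_3_2 adj_2_4
      rw [sw8, sw2] at h
      exact star_aux h
    have q23 : ¬(c s(A1, B3) = c s(B0, B2) ∧ c s(B2, B3) = c s(B0, B1)) := by
      have h := hpath A1 B3 B2 B0 B1 (by decide) adj_1_5 adj_5_4 adj_4_2 adj_2_3
      rw [sw6, sw7] at h
      exact star_aux h
    have q24 : ¬(c s(A0, B0) = c s(A1, B2) ∧ c s(A0, A1) = c s(B2, B3)) := by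
      have h := hpath B0 A0 A1 B2 B3 (by decide) adj_2_0 adj_0_1 adj_1_4 adj_4_5
      rw [sw0] at h
      exact star_aux h
    have q25 : ¬(c s(A0, B0) = c s(A1, B3) ∧ c s(A0, A1) = c s(B1, B3)) := by
      have h := hpath B0 A0 A1 B3 B1 (by decide) adj_2_0 adj_0_1 adj_1_5 adj_5_3
      rw [sw0, sw8] at h
      exact star_aux h
    have q26 : ¬(c s(A0, B0) = c s(A1, B3) ∧ c s(A0, A1) = c s(B2, B3)) := by
      have h := hpath B0 A0 A1 B3 B2 (by decide) adj_2_0 adj_0_1 adj_1_5 adj_5_4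
      rw [sw0, sw6] at h
      exact star_aux h
    have q27 : ¬(c s(A0, B0) = c s(B1, B3) ∧ c s(A0, B1) = c s(B2, B3)) := by
      have h := hpath B0 A0 B1 B3 B2 (by decide) adj_2_0 adj_0_3 adj_3_5 adj_5_4
      rw [sw0, sw6] at h
      exact star_aux h
    have q28 : ¬(c s(B0, B1) = c s(A0, A1) ∧ c s(A0, B1) = c s(A1, B2)) := by
      have h := hpath B0 B1 A0 A1 B2 (by decide) adj_2_3 adj_3_0 adj_0_1 adj_1_4
      rw [sw1] at h
      exact star_aux h
    have q29 : ¬(c s(B0, B1) = c s(A0, A1) ∧ c s(A0, B1) = c s(A1, B3)) := by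
      have h := hpath B0 B1 A0 A1 B3 (by decide) adj_2_3 adj_3_0 adj_0_1 adj_1_5
      rw [sw1] at h
      exact star_aux h
    have q30 : ¬(c s(B0, B1) = c s(A1, B3) ∧ c s(B1, B3) = c s(A1, B2)) := by
      have h := hpath B0 B1 B3 A1 B2 (by decide) adj_2_3 adj_3_5 adj_5_1 adj_1_4
      rw [sw5] at h
      exact star_aux h
    have q31 : ¬(c s(B0, B2) = c s(A0, A1) ∧ c s(A1, B2) = c s(A0, B1)) := by
      have h := hpath B0 B2 A1 A0 B1 (by decide) adj_2_4 adj_4_1 adj_1_0 adj_0_3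
      rw [sw4, sw3] at h
      exact star_aux h
    have q32 : ¬(c s(B0, B2) = c s(A1, B3) ∧ c s(A1, B2) = c s(B1, B3)) := by
      have h := hpath B0 B2 A1 B3 B1 (by decide) adj_2_4 adj_4_1 adj_1_5 adj_5_3
      rw [sw4, sw8] at h
      exact star_aux h
    have q33 : ¬(c s(A0, B1) = c s(A1, B2) ∧ c s(A0, A1) = c s(B2, B3)) := by
      have h := hpath B1 A0 A1 B2 B3 (by decide) adj_3_0 adj_0_1 adj_1_4 adj_4_5
      rw [sw1] at h
      exact star_aux h
    have q34 : ¬(c s(A0, B1) = c s(A1, B3) ∧ c s(A0, A1) = c s(B2, B3)) := by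
      have h := hpath B1 A0 A1 B3 B2 (by decide) adj_3_0 adj_0_1 adj_1_5 adj_5_4
      rw [sw1, sw6] at h
      exact star_aux h
    have q35 : ¬(c s(A0, B1) = c s(B0, B2) ∧ c s(A0, B0) = c s(B2, B3)) := by
      have h := hpath B1 A0 B0 B2 B3 (by decide) adj_3_0 adj_0_2 adj_2_4 adj_4_5
      rw [sw1] at h
      exact star_aux h
    have q36 : ¬(c s(B0, B1) = c s(A0, A1) ∧ c s(A0, B0) = c s(A1, B2)) := by
      have h := hpath B1 B0 A0 A1 B2 (by decide) adj_3_2 adj_2_0 adj_0_1 adj_1_4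
      rw [sw2, sw0] at h
      exact star_aux h
    have q37 : ¬(c s(B0, B1) = c s(A0, A1) ∧ c s(A0, B0) = c s(A1, B3)) := by
      have h := hpath B1 B0 A0 A1 B3 (by decide) adj_3_2 adj_2_0 adj_0_1 adj_1_5
      rw [sw2, sw0] at h
      exact star_aux h
    have q38 : ¬(c s(B0, B1) = c s(A1, B2) ∧ c s(B0, B2) = c s(A1, B3)) := by
      have h := hpath B1 B0 B2 A1 B3 (by decide) adj_3_2 adj_2_4 adj_4_1 adj_1_5
      rw [sw2, sw4] at h
      exact star_aux h
    have q39 : ¬(c s(A1, B2) = c s(A0, B1) ∧ c s(A0, A1) = c s(B1, B3)) := by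
      have h := hpath B2 A1 A0 B1 B3 (by decide) adj_4_1 adj_1_0 adj_0_3 adj_3_5
      rw [sw4, sw3] at h
      exact star_aux h
    have q40 : ¬(c s(B0, B2) = c s(A0, A1) ∧ c s(A0, B0) = c s(A1, B3)) := by
      have h := hpath B2 B0 A0 A1 B3 (by decide) adj_4_2 adj_2_0 adj_0_1 adj_1_5
      rw [sw7, sw0] at h
      exact star_aux h
    have q41 : ¬(c s(B0, B2) = c s(A0, B1) ∧ c s(A0, B0) = c s(B1, B3)) := by
      have h := hpath B2 B0 A0 B1 B3 (by decide) adj_4_2 adj_2_0 adj_0_3 adj_3_5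
      rw [sw7, sw0] at h
      exact star_aux h
    have q42 : ¬(c s(A0, A1) = c s(B0, B2) ∧ c s(A1, B2) = c s(A0, B0)) := by
      have h := hcyc A0 A1 B2 B0 (by decide) adj_0_1 adj_1_4 adj_4_2 adj_2_0
      rw [sw7, sw0] at h
      exact star_aux h
    have q43 : ¬(c s(A0, A1) = c s(B1, B3) ∧ c s(A1, B3) = c s(A0, B1)) := by
      have h := hcyc A0 A1 B3 B1 (by decide) adj_0_1 adj_1_5 adj_5_3 adj_3_0
      rw [sw8, sw1] at h
      exact star_aux h
    have q44 : ¬(c s(B0, B1) = c s(B2, B3) ∧ c s(B1, B3) = c s(B0, B2)) := by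
      have h := hcyc B0 B1 B3 B2 (by decide) adj_2_3 adj_3_5 adj_5_4 adj_4_2
      rw [sw6, sw7] at h
      exact star_aux h
    obtain ⟨σ, hinj, hs0, hs1, hs2⟩ := exists_perm (⟨c s(A0, B0), hn0⟩ : Fin 5) (⟨c s(A0, B1), hn1⟩ : Fin 5) (⟨c s(B0, B1), hn2⟩ : Fin 5)
      (fun h => p_0_1 (congrArg Fin.val h))
      (fun h => p_0_2 (congrArg Fin.val h))
      (fun h => p_1_2 (congrArg Fin.val h))
    refine noFive (σ (⟨c s(A0, A1), hn3⟩ : Fin 5)) (σ (⟨c s(A1, B2), hn4⟩ : Fin 5)) (σ (⟨c s(A1, B3), hn5⟩ : Fin 5)) (σ (⟨c s(B2, B3), hn6⟩ : Fin 5)) (σ (⟨c s(B0, B2), hn7⟩ : Fin 5)) (σ (⟨c s(B1, B3), hn8⟩ : Fin 5)) ?_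
    rw [← hs0, ← hs1, ← hs2]
    exact ⟨fun h => p_3_0 (congrArg Fin.val (hinj h)),
      fun h => p_3_1 (congrArg Fin.val (hinj h)),
      fun h => p_0_1 (congrArg Fin.val (hinj h)),
      fun h => p_3_4 (congrArg Fin.val (hinj h)),
      fun h => p_3_5 (congrArg Fin.val (hinj h)),
      fun h => p_4_5 (congrArg Fin.val (hinj h)),
      fun h => p_0_2 (congrArg Fin.val (hinj h)),
      fun h => p_0_7 (congrArg Fin.val (hinj h)),
      fun h => p_2_7 (congrArg Fin.val (hinj h)),
      fun h => p_1_2 (congrArg Fin.val (hinj h)),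
      fun h => p_1_8 (congrArg Fin.val (hinj h)),
      fun h => p_2_8 (congrArg Fin.val (hinj h)),
      fun h => p_4_7 (congrArg Fin.val (hinj h)),
      fun h => p_4_6 (congrArg Fin.val (hinj h)),
      fun h => p_7_6 (congrArg Fin.val (hinj h)),
      fun h => p_5_8 (congrArg Fin.val (hinj h)),
      fun h => p_5_6 (congrArg Fin.val (hinj h)),
      fun h => p_8_6 (congrArg Fin.val (hinj h)),
      fun h => q0 ⟨congrArg Fin.val (hinj h.1), congrArg Fin.val (hinj h.2)⟩,
      fun h => q1 ⟨congrArg Fin.val (hinj h.1), congrArg Fin.val (hinj h.2)⟩,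
      fun h => q2 ⟨congrArg Fin.val (hinj h.1), congrArg Fin.val (hinj h.2)⟩,
      fun h => q3 ⟨congrArg Fin.val (hinj h.1), congrArg Fin.val (hinj h.2)⟩,
      fun h => q4 ⟨congrArg Fin.val (hinj h.1), congrArg Fin.val (hinj h.2)⟩,
      fun h => q5 ⟨congrArg Fin.val (hinj h.1), congrArg Fin.val (hinj h.2)⟩,
      fun h => q6 ⟨congrArg Fin.val (hinj h.1), congrArg Fin.val (hinj h.2)⟩,
      fun h => q7 ⟨congrArg Fin.val (hinj h.1), congrArg Fin.val (hinj h.2)⟩,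
      fun h => q8 ⟨congrArg Fin.val (hinj h.1), congrArg Fin.val (hinj h.2)⟩,
      fun h => q9 ⟨congrArg Fin.val (hinj h.1), congrArg Fin.val (hinj h.2)⟩,
      fun h => q10 ⟨congrArg Fin.val (hinj h.1), congrArg Fin.val (hinj h.2)⟩,
      fun h => q11 ⟨congrArg Fin.val (hinj h.1), congrArg Fin.val (hinj h.2)⟩,
      fun h => q12 ⟨congrArg Fin.val (hinj h.1), congrArg Fin.val (hinj h.2)⟩,
      fun h => q13 ⟨congrArg Fin.val (hinj h.1), congrArg Fin.val (hinj h.2)⟩,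
      fun h => q14 ⟨congrArg Fin.val (hinj h.1), congrArg Fin.val (hinj h.2)⟩,
      fun h => q15 ⟨congrArg Fin.val (hinj h.1), congrArg Fin.val (hinj h.2)⟩,
      fun h => q16 ⟨congrArg Fin.val (hinj h.1), congrArg Fin.val (hinj h.2)⟩,
      fun h => q17 ⟨congrArg Fin.val (hinj h.1), congrArg Fin.val (hinj h.2)⟩,
      fun h => q18 ⟨congrArg Fin.val (hinj h.1), congrArg Fin.val (hinj h.2)⟩,
      fun h => q19 ⟨congrArg Fin.val (hinj h.1), congrArg Fin.val (hinj h.2)⟩,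
      fun h => q20 ⟨congrArg Fin.val (hinj h.1), congrArg Fin.val (hinj h.2)⟩,
      fun h => q21 ⟨congrArg Fin.val (hinj h.1), congrArg Fin.val (hinj h.2)⟩,
      fun h => q22 ⟨congrArg Fin.val (hinj h.1), congrArg Fin.val (hinj h.2)⟩,
      fun h => q23 ⟨congrArg Fin.val (hinj h.1), congrArg Fin.val (hinj h.2)⟩,
      fun h => q24 ⟨congrArg Fin.val (hinj h.1), congrArg Fin.val (hinj h.2)⟩,
      fun h => q25 ⟨congrArg Fin.val (hinj h.1), congrArg Fin.val (hinj h.2)⟩,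
      fun h => q26 ⟨congrArg Fin.val (hinj h.1), congrArg Fin.val (hinj h.2)⟩,
      fun h => q27 ⟨congrArg Fin.val (hinj h.1), congrArg Fin.val (hinj h.2)⟩,
      fun h => q28 ⟨congrArg Fin.val (hinj h.1), congrArg Fin.val (hinj h.2)⟩,
      fun h => q29 ⟨congrArg Fin.val (hinj h.1), congrArg Fin.val (hinj h.2)⟩,
      fun h => q30 ⟨congrArg Fin.val (hinj h.1), congrArg Fin.val (hinj h.2)⟩,
      fun h => q31 ⟨congrArg Fin.val (hinj h.1), congrArg Fin.val (hinj h.2)⟩,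
      fun h => q32 ⟨congrArg Fin.val (hinj h.1), congrArg Fin.val (hinj h.2)⟩,
      fun h => q33 ⟨congrArg Fin.val (hinj h.1), congrArg Fin.val (hinj h.2)⟩,
      fun h => q34 ⟨congrArg Fin.val (hinj h.1), congrArg Fin.val (hinj h.2)⟩,
      fun h => q35 ⟨congrArg Fin.val (hinj h.1), congrArg Fin.val (hinj h.2)⟩,
      fun h => q36 ⟨congrArg Fin.val (hinj h.1), congrArg Fin.val (hinj h.2)⟩,
      fun h => q37 ⟨congrArg Fin.val (hinj h.1), congrArg Fin.val (hinj h.2)⟩,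
      fun h => q38 ⟨congrArg Fin.val (hinj h.1), congrArg Fin.val (hinj h.2)⟩,
      fun h => q39 ⟨congrArg Fin.val (hinj h.1), congrArg Fin.val (hinj h.2)⟩,
      fun h => q40 ⟨congrArg Fin.val (hinj h.1), congrArg Fin.val (hinj h.2)⟩,
      fun h => q41 ⟨congrArg Fin.val (hinj h.1), congrArg Fin.val (hinj h.2)⟩,
      fun h => q42 ⟨congrArg Fin.val (hinj h.1), congrArg Fin.val (hinj h.2)⟩,
      fun h => q43 ⟨congrArg Fin.val (hinj h.1), congrArg Fin.val (hinj h.2)⟩,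
      fun h => q44 ⟨congrArg Fin.val (hinj h.1), congrArg Fin.val (hinj h.2)⟩⟩
end

section
/- For every h ≥ 2, the necklace Ne_h admits no star 4-edge coloring, i.e., χ'_st(Ne_h) ≥ 5. -/
lemma not3 {p q r s x y : ℕ} (hp : p = x ∨ p = y) (hq : q = x ∨ q = y)
    (hr : r = x ∨ r = y) (hs : s = x ∨ s = y) :
    ¬ 3 ≤ ({p, q, r, s} : Finset ℕ).card := by
  intro h3
  have hsub : ({p, q, r, s} : Finset ℕ) ⊆ {x, y} := by
    intro z hz
    simp only [Finset.mem_insert, Finset.mem_singleton] at hz ⊢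
    rcases hz with rfl | rfl | rfl | rfl <;> tauto
  have h1 := h3.trans (Finset.card_le_card hsub)
  have h2 : ({x, y} : Finset ℕ).card ≤ 2 :=
    (Finset.card_insert_le _ _).trans (by simp)
  omega

lemma neckCycle_eq (k : ℕ) :
    neckCycle (k + 2) = 0 :: (List.range' 2 k ++ [k + 2, k + 3, 1]) := by
  simp [neckCycle]

lemma mem_zip_02 (k : ℕ) :
    ((0 : ℕ), (2 : ℕ)) ∈ (neckCycle (k + 2)).zip ((neckCycle (k + 2)).rotate 1) := by
  rw [neckCycle_eq, List.rotate_cons_succ, List.rotate_zero]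
  cases k with
  | zero => simp
  | succ j =>
      rw [List.range'_succ]
      simp [List.zip_cons_cons]

lemma mem_zip_10 (k : ℕ) :
    ((1 : ℕ), (0 : ℕ)) ∈ (neckCycle (k + 2)).zip ((neckCycle (k + 2)).rotate 1) := by
  rw [neckCycle_eq, List.rotate_cons_succ, List.rotate_zero]
  rw [show (0 : ℕ) :: (List.range' 2 k ++ [k + 2, k + 3, 1]) =
      ((0 : ℕ) :: (List.range' 2 k ++ [k + 2, k + 3])) ++ [1] by simp]
  rw [show ((List.range' 2 k ++ [k + 2, k + 3, 1]) : List ℕ) =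
      (List.range' 2 k ++ [k + 2, k + 3]) ++ [1] by simp]
  rw [List.zip_append (by simp)]
  simp

lemma gadget_contra {A B C E F G : ℕ}
    (bA : A < 4) (bB : B < 4) (bC : C < 4) (bE : E < 4) (bF : F < 4) (bG : G < 4)
    (hAB : A ≠ B) (hAC : A ≠ C) (hBC : B ≠ C) (hAF : A ≠ F) (hBF : B ≠ F)
    (hBE : B ≠ E) (hCE : C ≠ E) (hFG : F ≠ G) (hEG : E ≠ G)
    (hP2 : 3 ≤ ({A, F, G, E} : Finset ℕ).card)
    (hP3 : 3 ≤ ({B, F, G, E} : Finset ℕ).card)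
    (hP4 : 3 ≤ ({C, E, G, F} : Finset ℕ).card)
    (hP5 : 3 ≤ ({C, B, F, G} : Finset ℕ).card)
    (hP6 : 3 ≤ ({A, B, E, G} : Finset ℕ).card)
    (hP7 : 3 ≤ ({E, C, A, F} : Finset ℕ).card)
    (hP8 : 3 ≤ ({G, E, C, A} : Finset ℕ).card)
    (hP10 : 3 ≤ ({G, F, A, C} : Finset ℕ).card) : False := by
  by_cases hEA : E = A
  · have hGA : G ≠ A := fun hx => not3 (x := A) (y := B) (.inl rfl) (.inr rfl) (.inl hEA) (.inl hx) hP6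
    have hGB : G ≠ B := fun hx => not3 (x := A) (y := B) (.inl rfl) (.inr rfl) (.inl hEA) (.inr hx) hP6
    have hGC : G ≠ C := fun hx => not3 (x := A) (y := C) (.inr hx) (.inl hEA) (.inr rfl) (.inl rfl) hP8
    have hFC : F ≠ C := fun hx => not3 (x := A) (y := C) (.inl hEA) (.inr rfl) (.inl rfl) (.inr hx) hP7
    clear hP2 hP3 hP4 hP5 hP6 hP7 hP8 hP10
    omega
  · by_cases hFC : F = C
    · have hGB : G ≠ B := fun hx => not3 (x := B) (y := C) (.inr rfl) (.inl rfl) (.inr hFC) (.inl hx) hP5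
      have hGC : G ≠ C := fun hx => not3 (x := B) (y := C) (.inr rfl) (.inl rfl) (.inr hFC) (.inr hx) hP5
      have hGA : G = A := by clear hP2 hP3 hP4 hP5 hP6 hP7 hP8 hP10; omega
      exact not3 (x := A) (y := C) (.inl hGA) (.inr hFC) (.inl rfl) (.inr rfl) hP10
    · have hFE : F = E := by clear hP2 hP3 hP4 hP5 hP6 hP7 hP8 hP10; omega
      have hGA : G ≠ A := fun hx => not3 (x := A) (y := E) (.inl rfl) (.inr hFE) (.inl hx) (.inr rfl) hP2
      have hGB : G ≠ B := fun hx => not3 (x := B) (y := E) (.inl rfl) (.inr hFE) (.inl hx) (.inr rfl) hP3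
      have hGC : G = C := by clear hP2 hP3 hP4 hP5 hP6 hP7 hP8 hP10; omega
      exact not3 (x := C) (y := E) (.inl rfl) (.inr rfl) (.inl hGC) (.inr hFE) hP4

set_option maxHeartbeats 2000000 in
/-- For every `h ≥ 2`, the necklace `Ne_h` admits no star 4-edge coloring, i.e. its
star chromatic index is at least 5. -/
theorem necklace_no_star4 (h : ℕ) (hh : 2 ≤ h) :
    ¬ ∃ c : Sym2 (NeckVert h) → ℕ, IsStarEdgeColoring (necklace h) 4 c := by
  obtain ⟨k, rfl⟩ : ∃ k, h = k + 2 := ⟨h - 2, by omega⟩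
  rintro ⟨c, hlt, hprop, hpath, hcyc⟩
  set V1 : NeckVert (k + 2) := Sum.inl ⟨0, by omega⟩ with hV1
  set V2 : NeckVert (k + 2) := Sum.inl ⟨1, by omega⟩ with hV2
  set U0 : NeckVert (k + 2) := Sum.inr ⟨0, by omega⟩ with hU0
  set U1 : NeckVert (k + 2) := Sum.inr ⟨1, by omega⟩ with hU1
  set U2 : NeckVert (k + 2) := Sum.inr ⟨2, by omega⟩ with hU2
  -- vertex distinctness
  have nV1V2 : V1 ≠ V2 := by rw [hV1, hV2]; simp [Fin.ext_iff]
  have nU0U1 : U0 ≠ U1 := by rw [hU0, hU1]; simp [Fin.ext_iff]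
  have nU0U2 : U0 ≠ U2 := by rw [hU0, hU2]; simp [Fin.ext_iff]
  have nU1U2 : U1 ≠ U2 := by rw [hU1, hU2]; simp [Fin.ext_iff]
  have nV1U0 : V1 ≠ U0 := by rw [hV1, hU0]; simp
  have nV1U1 : V1 ≠ U1 := by rw [hV1, hU1]; simp
  have nV1U2 : V1 ≠ U2 := by rw [hV1, hU2]; simp
  have nV2U0 : V2 ≠ U0 := by rw [hV2, hU0]; simp
  have nV2U1 : V2 ≠ U1 := by rw [hV2, hU1]; simp
  have nV2U2 : V2 ≠ U2 := by rw [hV2, hU2]; simp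
  -- adjacency facts
  have aV1V2 : (necklace (k + 2)).Adj V1 V2 := by
    rw [necklace, SimpleGraph.fromRel_adj]
    exact ⟨nV1V2, Or.inl (show (1 : ℕ) = 0 + 1 from rfl)⟩
  have aV1U0 : (necklace (k + 2)).Adj V1 U0 := by
    rw [necklace, SimpleGraph.fromRel_adj]
    refine ⟨nV1U0, Or.inl ?_⟩
    show (0 : ℕ) = 0 ∧ ((0 : ℕ) = 0 ∨ (0 : ℕ) = 1) ∨ _ ∨ _
    omega
  have aV1U1 : (necklace (k + 2)).Adj V1 U1 := by
    rw [necklace, SimpleGraph.fromRel_adj]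
    refine ⟨nV1U1, Or.inl ?_⟩
    show (0 : ℕ) = 0 ∧ ((1 : ℕ) = 0 ∨ (1 : ℕ) = 1) ∨ _ ∨ _
    omega
  have aV2U2 : (necklace (k + 2)).Adj V2 U2 := by
    rw [necklace, SimpleGraph.fromRel_adj]
    refine ⟨nV2U2, Or.inl ?_⟩
    show ((1 : ℕ) = 0 ∧ ((2 : ℕ) = 0 ∨ (2 : ℕ) = 1)) ∨
      ((1 : ℕ) = k + 2 - 1 ∧ ((2 : ℕ) = k + 2 ∨ (2 : ℕ) = k + 2 + 1)) ∨
      ((2 : ℕ) = 1 + 1 ∧ 2 ≤ (2 : ℕ) ∧ (2 : ℕ) ≤ k + 2 - 1)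
    omega
  have aU0U1 : (necklace (k + 2)).Adj U0 U1 := by
    rw [necklace, SimpleGraph.fromRel_adj]
    exact ⟨nU0U1, Or.inr (mem_zip_10 k)⟩
  have aU0U2 : (necklace (k + 2)).Adj U0 U2 := by
    rw [necklace, SimpleGraph.fromRel_adj]
    exact ⟨nU0U2, Or.inl (mem_zip_02 k)⟩
  -- colors
  obtain ⟨A, cA1⟩ : ∃ A, c s(U0, U1) = A := ⟨_, rfl⟩
  obtain ⟨B, cB1⟩ : ∃ B, c s(V1, U0) = B := ⟨_, rfl⟩
  obtain ⟨C, cC1⟩ : ∃ C, c s(V1, U1) = C := ⟨_, rfl⟩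
  obtain ⟨E, cE1⟩ : ∃ E, c s(V1, V2) = E := ⟨_, rfl⟩
  obtain ⟨F, cF1⟩ : ∃ F, c s(U0, U2) = F := ⟨_, rfl⟩
  obtain ⟨G, cG1⟩ : ∃ G, c s(V2, U2) = G := ⟨_, rfl⟩
  have cA2 : c s(U1, U0) = A := by rw [Sym2.eq_swap]; exact cA1
  have cB2 : c s(U0, V1) = B := by rw [Sym2.eq_swap]; exact cB1
  have cC2 : c s(U1, V1) = C := by rw [Sym2.eq_swap]; exact cC1
  have cE2 : c s(V2, V1) = E := by rw [Sym2.eq_swap]; exact cE1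
  have cF2 : c s(U2, U0) = F := by rw [Sym2.eq_swap]; exact cF1
  have cG2 : c s(U2, V2) = G := by rw [Sym2.eq_swap]; exact cG1
  -- bounds
  have bA : A < 4 := cA1 ▸ hlt _ aU0U1
  have bB : B < 4 := cB1 ▸ hlt _ aV1U0
  have bC : C < 4 := cC1 ▸ hlt _ aV1U1
  have bE : E < 4 := cE1 ▸ hlt _ aV1V2
  have bF : F < 4 := cF1 ▸ hlt _ aU0U2
  have bG : G < 4 := cG1 ▸ hlt _ aV2U2
  -- properness
  have hAB : A ≠ B := by
    have := hprop U0 U1 V1 aU0U1 aV1U0.symm (fun hx => nV1U1 hx.symm)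
    rwa [cA1, cB2] at this
  have hAF : A ≠ F := by
    have := hprop U0 U1 U2 aU0U1 aU0U2 nU1U2
    rwa [cA1, cF1] at this
  have hBF : B ≠ F := by
    have := hprop U0 V1 U2 aV1U0.symm aU0U2 nV1U2
    rwa [cB2, cF1] at this
  have hBC : B ≠ C := by
    have := hprop V1 U0 U1 aV1U0 aV1U1 nU0U1
    rwa [cB1, cC1] at this
  have hBE : B ≠ E := by
    have := hprop V1 U0 V2 aV1U0 aV1V2 (fun hx => nV2U0 hx.symm)
    rwa [cB1, cE1] at this
  have hCE : C ≠ E := by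
    have := hprop V1 U1 V2 aV1U1 aV1V2 (fun hx => nV2U1 hx.symm)
    rwa [cC1, cE1] at this
  have hAC : A ≠ C := by
    have := hprop U1 U0 V1 aU0U1.symm aV1U1.symm (fun hx => nV1U0 hx.symm)
    rwa [cA2, cC2] at this
  have hFG : F ≠ G := by
    have := hprop U2 U0 V2 aU0U2.symm aV2U2.symm (fun hx => nV2U0 hx.symm)
    rwa [cF2, cG2] at this
  have hEG : E ≠ G := by
    have := hprop V2 V1 U2 aV1V2.symm aV2U2 (fun hx => nV1U2 hx)
    rwa [cE2, cG1] at this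
  -- nodup lists
  have nd5a : ([U1, U0, U2, V2, V1] : List (NeckVert (k + 2))).Nodup := by
    simp [hV1, hV2, hU0, hU1, hU2, Fin.ext_iff]
  have nd4 : ([V1, U0, U2, V2] : List (NeckVert (k + 2))).Nodup := by
    simp [hV1, hV2, hU0, hU1, hU2, Fin.ext_iff]
  have nd5b : ([U1, V1, V2, U2, U0] : List (NeckVert (k + 2))).Nodup := by
    simp [hV1, hV2, hU0, hU1, hU2, Fin.ext_iff]
  have nd5c : ([U1, V1, U0, U2, V2] : List (NeckVert (k + 2))).Nodup := by
    simp [hV1, hV2, hU0, hU1, hU2, Fin.ext_iff]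
  have nd5d : ([U1, U0, V1, V2, U2] : List (NeckVert (k + 2))).Nodup := by
    simp [hV1, hV2, hU0, hU1, hU2, Fin.ext_iff]
  have nd5e : ([V2, V1, U1, U0, U2] : List (NeckVert (k + 2))).Nodup := by
    simp [hV1, hV2, hU0, hU1, hU2, Fin.ext_iff]
  have nd5f : ([U2, V2, V1, U1, U0] : List (NeckVert (k + 2))).Nodup := by
    simp [hV1, hV2, hU0, hU1, hU2, Fin.ext_iff]
  have nd5g : ([V2, U2, U0, U1, V1] : List (NeckVert (k + 2))).Nodup := by
    simp [hV1, hV2, hU0, hU1, hU2, Fin.ext_iff]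
  -- path constraints
  have hP2 : 3 ≤ ({A, F, G, E} : Finset ℕ).card := by
    have := hpath U1 U0 U2 V2 V1 nd5a aU0U1.symm aU0U2 aV2U2.symm aV1V2.symm
    rwa [cA2, cF1, cG2, cE2] at this
  have hP3 : 3 ≤ ({B, F, G, E} : Finset ℕ).card := by
    have := hcyc V1 U0 U2 V2 nd4 aV1U0 aU0U2 aV2U2.symm aV1V2.symm
    rwa [cB1, cF1, cG2, cE2] at this
  have hP4 : 3 ≤ ({C, E, G, F} : Finset ℕ).card := by
    have := hpath U1 V1 V2 U2 U0 nd5b aV1U1.symm aV1V2 aV2U2 aU0U2.symm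
    rwa [cC2, cE1, cG1, cF2] at this
  have hP5 : 3 ≤ ({C, B, F, G} : Finset ℕ).card := by
    have := hpath U1 V1 U0 U2 V2 nd5c aV1U1.symm aV1U0 aU0U2 aV2U2.symm
    rwa [cC2, cB1, cF1, cG2] at this
  have hP6 : 3 ≤ ({A, B, E, G} : Finset ℕ).card := by
    have := hpath U1 U0 V1 V2 U2 nd5d aU0U1.symm aV1U0.symm aV1V2 aV2U2
    rwa [cA2, cB2, cE1, cG1] at this
  have hP7 : 3 ≤ ({E, C, A, F} : Finset ℕ).card := by
    have := hpath V2 V1 U1 U0 U2 nd5e aV1V2.symm aV1U1 aU0U1.symm aU0U2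
    rwa [cE2, cC1, cA2, cF1] at this
  have hP8 : 3 ≤ ({G, E, C, A} : Finset ℕ).card := by
    have := hpath U2 V2 V1 U1 U0 nd5f aV2U2.symm aV1V2.symm aV1U1 aU0U1.symm
    rwa [cG2, cE2, cC1, cA2] at this
  have hP10 : 3 ≤ ({G, F, A, C} : Finset ℕ).card := by
    have := hpath V2 U2 U0 U1 V1 nd5g aV2U2 aU0U2.symm aU0U1 aV1U1.symm
    rwa [cG1, cF2, cA1, cC2] at this
  exact gadget_contra bA bB bC bE bF bG hAB hAC hBC hAF hBF hBE hCE hFG hEG hP2 hP3 hP4 hP5 hP6 hP7 hP8 hP10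
end
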